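/- Let G = (V_L, V_R, E) be a simple bipartite graph with minimum degree at least 2 and left and right average degrees d_L and d_R. If e⃗ is a uniformly chosen directed edge from V_R to V_L, then for every i ≥ 1, E[n_{2i}(e⃗)] ≥ (d_R-1)^i(d_L-1)^i. -/

import Mathlib

variable {V : Type*}

/-- \`w : Fin (i+1) → V\` is a non-returning walk of \`i\` edges in \`G\`. -/
def IsNR (G : SimpleGraph V) (i : ℕ) (w : Fin (i + 1) → V) : Prop :=
  (∀ j : ℕ, ∀ _h : j < i, G.Adj (w ⟨j, by omega⟩) (w ⟨j + 1, by omega⟩)) ∧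
  (∀ j : ℕ, ∀ _h : j + 2 ≤ i, w ⟨j, by omega⟩ ≠ w ⟨j + 2, by omega⟩)

/-- \`nE G i u v\` : the number of non-returning walks of \`i + 1\` edges whose
first edge is the directed edge \`(u, v)\`. -/
noncomputable def nE (G : SimpleGraph V) (i : ℕ) (u v : V) : ℕ :=
  Nat.card {w : Fin (i + 2) → V // IsNR G (i + 1) w ∧ w 0 = u ∧ w 1 = v}

/-!
Write `N_k(u, v) = nE G k u v`. Since `N_{k+1}(u, v) = ∑_{x ∈ N(v) \ {u}} N_k(v, x)`, concavity of
`log` gives `log N_{k+1}(u, v) ≥ log (deg v - 1) + (mean of log N_k(v, x) over the deg v - 1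
continuations)`. Summed over the directed edges leaving one side, these means recombine into the sum
of `log N_k` over the directed edges leaving the other side, because every directed edge `(v, x)`
continues exactly `deg v - 1` directed edges `(u, v)`: the uniform measure on directed edges is
stationary for the non-backtracking walk. Jensen's inequality for the convex function
`x ↦ x log (x - 1)` on `[2, ∞)` bounds `∑_{v ∈ B} deg v log (deg v - 1)` below by
`|E| log (d_B - 1)`. Iterating `2i` times and a last use of concavity of `log` give the bound.
-/

open Finset Real SimpleGraph

theorem convexOn_mul_log_sub_one : ConvexOn ℝ (Set.Ici 2) fun x : ℝ => x * log (x - 1) := by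
  refine convexOn_of_hasDerivWithinAt2_nonneg (convex_Ici 2)
    (f' := fun x => log (x - 1) + x / (x - 1)) (f'' := fun x => (x - 2) / (x - 1) ^ 2) ?_ ?_ ?_ ?_
  · refine continuousOn_id.mul <| ContinuousOn.log (by fun_prop) fun x hx => ?_
    simp only [Set.mem_Ici] at hx
    linarith
  all_goals intro x hx; rw [interior_Ici, Set.mem_Ioi] at hx
  · have hx1 : x - 1 ≠ 0 := by linarith
    have hlog := ((hasDerivAt_id' x).sub_const 1).log hx1
    refine (((hasDerivAt_id' x).mul hlog).congr_deriv ?_).hasDerivWithinAt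
    field_simp
  · have hx1 : x - 1 ≠ 0 := by linarith
    have hlog := ((hasDerivAt_id' x).sub_const 1).log hx1
    refine ((hlog.add ((hasDerivAt_id' x).div ((hasDerivAt_id' x).sub_const 1) hx1)).congr_deriv
      ?_).hasDerivWithinAt
    field_simp
    ring
  · have : 0 ≤ x - 2 := by linarith
    positivity

theorem sum_log_div_card_le_log_sum_div_card {ι : Type*} {s : Finset ι} {f : ι → ℝ}
    (hf : ∀ i ∈ s, 0 < f i) :
    (∑ i ∈ s, log (f i)) / #s ≤ log ((∑ i ∈ s, f i) / #s) := by
  rcases s.eq_empty_or_nonempty with rfl | hs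
  · simp
  have hw : ∑ _i ∈ s, ((#s : ℝ))⁻¹ = 1 := by
    rw [sum_const, nsmul_eq_mul, mul_inv_cancel₀ (by simp [hs.ne_empty])]
  have := strictConcaveOn_log_Ioi.concaveOn.le_map_sum (fun _ _ => by positivity) hw hf
  simp only [smul_eq_mul] at this
  rwa [← mul_sum, ← mul_sum, inv_mul_eq_div, inv_mul_eq_div] at this

theorem sum_mul_log_sub_one_le {ι : Type*} {s : Finset ι} {f : ι → ℝ}
    (hf : ∀ i ∈ s, 2 ≤ f i) :
    (∑ i ∈ s, f i) * log ((∑ i ∈ s, f i) / #s - 1) ≤ ∑ i ∈ s, f i * log (f i - 1) := by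
  rcases s.eq_empty_or_nonempty with rfl | hs
  · simp
  have hs' : (0 : ℝ) < #s := by simp [hs]
  have hw : ∑ _i ∈ s, ((#s : ℝ))⁻¹ = 1 := by
    rw [sum_const, nsmul_eq_mul, mul_inv_cancel₀ hs'.ne']
  have := convexOn_mul_log_sub_one.map_sum_le (fun _ _ => by positivity) hw hf
  simp only [smul_eq_mul] at this
  rw [← mul_sum, ← mul_sum, inv_mul_eq_div, inv_mul_eq_div] at this
  calc (∑ i ∈ s, f i) * log ((∑ i ∈ s, f i) / #s - 1)
      = #s * ((∑ i ∈ s, f i) / #s * log ((∑ i ∈ s, f i) / #s - 1)) := by field_simp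
    _ ≤ _ := by rwa [← le_div_iff₀' hs']

theorem Finset.sum_sum_erase {α R : Type*} [DecidableEq α] [CommRing R] (s : Finset α)
    (f : α → R) : ∑ a ∈ s, ∑ b ∈ s.erase a, f b = (#s - 1) * ∑ b ∈ s, f b := by
  rw [sum_congr rfl fun a ha => sum_erase_eq_sub ha, sum_sub_distrib, sum_const, nsmul_eq_mul]
  ring

namespace SimpleGraph.IsBipartiteWith

variable {G : SimpleGraph V} [Fintype V] [DecidableRel G.Adj] {A B : Finset V}

theorem sum_neighborFinset_comm {M : Type*} [AddCommMonoid M]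
    (h : G.IsBipartiteWith A B) (F : V → V → M) :
    ∑ u ∈ A, ∑ v ∈ G.neighborFinset u, F u v = ∑ v ∈ B, ∑ u ∈ G.neighborFinset v, F u v := by
  refine sum_comm' fun u v => ?_
  simp only [mem_neighborFinset]
  exact ⟨fun ⟨hu, huv⟩ => ⟨huv.symm, h.mem_of_mem_adj hu huv⟩,
    fun ⟨hvu, hv⟩ => ⟨h.mem_of_mem_adj' hv hvu.symm, hvu.symm⟩⟩

theorem card_edgeFinset_mul_log_le (h : G.IsBipartiteWith A B) (hdeg : ∀ v, 2 ≤ G.degree v) :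
    (#G.edgeFinset : ℝ) * log (#G.edgeFinset / #B - 1) ≤
      ∑ v ∈ B, (G.degree v : ℝ) * log (G.degree v - 1) := by
  have hB : ∑ v ∈ B, (G.degree v : ℝ) = #G.edgeFinset := by
    exact_mod_cast isBipartiteWith_sum_degrees_eq_card_edges' h
  rw [← hB]
  exact sum_mul_log_sub_one_le fun v _ => by exact_mod_cast hdeg v

theorem two_le_card_edgeFinset_div (h : G.IsBipartiteWith A B) (hdeg : ∀ v, 2 ≤ G.degree v)
    (hA : A.Nonempty) : (2 : ℝ) ≤ #G.edgeFinset / #A := by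
  rw [le_div_iff₀ (by simp [hA]), ← isBipartiteWith_sum_degrees_eq_card_edges h]
  have h2 := card_nsmul_le_sum A (fun v => (G.degree v : ℝ)) 2 fun v _ => by exact_mod_cast hdeg v
  rw [nsmul_eq_mul] at h2
  push_cast
  linarith

end SimpleGraph.IsBipartiteWith

section Walks

variable (G : SimpleGraph V)

theorem isNR_cons_iff {n : ℕ} (u : V) (w : Fin (n + 2) → V) :
    IsNR G (n + 2) (Fin.cons u w) ↔ G.Adj u (w 0) ∧ u ≠ w 1 ∧ IsNR G (n + 1) w := by
  have hw1 : (Fin.cons u w : Fin (n + 3) → V) ⟨2, by omega⟩ = w 1 := by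
    rw [← Fin.mk_one]; rfl
  constructor
  · rintro ⟨hadj, hnr⟩
    exact ⟨by simpa using hadj 0 (by omega), by simpa [hw1] using hnr 0 (by omega),
      fun j hj => hadj (j + 1) (by omega), fun j hj => hnr (j + 1) (by omega)⟩
  · rintro ⟨hu0, hu1, hadj, hnr⟩
    refine ⟨fun j hj => ?_, fun j hj => ?_⟩
    · cases j with
      | zero => simpa using hu0
      | succ j => exact hadj j (by omega)
    · cases j with
      | zero => simpa [hw1] using hu1
      | succ j => exact hnr j (by omega)

variable [Fintype V] [DecidableEq V] [DecidableRel G.Adj]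

theorem nE_succ {u v : V} (huv : G.Adj u v) (k : ℕ) :
    nE G (k + 1) u v = ∑ x ∈ (G.neighborFinset v).erase u, nE G k v x := by
  classical
  simp only [nE, Nat.card_eq_fintype_card, Fintype.card_subtype]
  calc #{w : Fin (k + 3) → V | IsNR G (k + 2) w ∧ w 0 = u ∧ w 1 = v}
      = #{w : Fin (k + 2) → V | IsNR G (k + 1) w ∧ w 0 = v ∧ w 1 ≠ u} := by
        refine card_nbij' (i := Fin.tail)
          (j := fun w : Fin (k + 2) → V => (Fin.cons u w : Fin (k + 3) → V)) ?_ ?_ ?_ ?_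
        · intro w hw
          simp only [coe_filter, mem_univ, true_and, Set.mem_ofPred_eq] at hw ⊢
          obtain ⟨hnr, rfl, rfl⟩ := hw
          rw [← Fin.cons_self_tail w, isNR_cons_iff] at hnr
          exact ⟨hnr.2.2, rfl, hnr.2.1.symm⟩
        · intro w hw
          simp only [coe_filter, mem_univ, true_and, Set.mem_ofPred_eq] at hw ⊢
          obtain ⟨hnr, rfl, hu⟩ := hw
          exact ⟨(isNR_cons_iff G u w).2 ⟨huv, hu.symm, hnr⟩, rfl, rfl⟩
        · intro w hw
          simp only [coe_filter, mem_univ, true_and, Set.mem_ofPred_eq] at hw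
          rw [← hw.2.1]
          exact Fin.cons_self_tail w
        · intro w _
          exact Fin.tail_cons (α := fun _ => V) u w
    _ = ∑ x ∈ (G.neighborFinset v).erase u,
          #{w : Fin (k + 2) → V | IsNR G (k + 1) w ∧ w 0 = v ∧ w 1 = x} := by
        rw [card_eq_sum_card_fiberwise (f := fun w => w 1) (t := (G.neighborFinset v).erase u)]
        · refine sum_congr rfl fun x hx => ?_
          rw [filter_filter]
          congr 1
          ext w
          simp only [mem_filter, mem_univ, true_and]
          constructor
          · rintro ⟨⟨hnr, hv, -⟩, hx⟩
            exact ⟨hnr, hv, hx⟩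
          · rintro ⟨hnr, hv, rfl⟩
            exact ⟨⟨hnr, hv, (mem_erase.1 hx).1⟩, rfl⟩
        · intro w hw
          simp only [coe_filter, mem_univ, true_and, Set.mem_ofPred_eq] at hw
          obtain ⟨⟨hadj, -⟩, rfl, hu⟩ := hw
          simpa [hu] using hadj 0 (by omega)

variable {G}

theorem card_erase_neighborFinset {u v : V} (huv : G.Adj u v) :
    #((G.neighborFinset v).erase u) = G.degree v - 1 := by
  rw [card_erase_of_mem (by simpa using huv.symm), card_neighborFinset_eq_degree]

theorem nE_pos (hdeg : ∀ v, 2 ≤ G.degree v) {u v : V} (huv : G.Adj u v) (k : ℕ) :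
    0 < nE G k u v := by
  induction k generalizing u v with
  | zero =>
    refine Nat.card_pos_iff.2
      ⟨⟨⟨![u, v], ⟨fun j hj => ?_, fun j hj => by omega⟩, rfl, rfl⟩⟩, inferInstance⟩
    obtain rfl : j = 0 := by omega
    simpa using huv
  | succ k ih =>
    rw [nE_succ G huv]
    refine sum_pos (fun x hx => ih (by simpa using (mem_erase.1 hx).2)) ?_
    rw [← card_pos, card_erase_neighborFinset huv]
    have := hdeg v
    omega

theorem log_degree_sub_one_add_le_log_nE_succ (hdeg : ∀ v, 2 ≤ G.degree v) {u v : V}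
    (huv : G.Adj u v) (k : ℕ) :
    log (G.degree v - 1) + (∑ x ∈ (G.neighborFinset v).erase u, log (nE G k v x)) /
      (G.degree v - 1) ≤ log (nE G (k + 1) u v) := by
  set s := (G.neighborFinset v).erase u
  have hs : (#s : ℝ) = G.degree v - 1 := by
    rw [card_erase_neighborFinset huv, Nat.cast_sub (by linarith [hdeg v]), Nat.cast_one]
  have hpos : ∀ x ∈ s, (0 : ℝ) < nE G k v x := fun x hx =>
    Nat.cast_pos.2 (nE_pos hdeg (by simpa using (mem_erase.1 hx).2) k)
  have hs0 : (0 : ℝ) < #s := by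
    have : (2 : ℝ) ≤ G.degree v := by exact_mod_cast hdeg v
    linarith
  rw [nE_succ G huv, Nat.cast_sum, ← hs, ← mul_div_cancel₀ (∑ x ∈ s, (nE G k v x : ℝ)) hs0.ne',
    log_mul hs0.ne' (div_pos (sum_pos hpos (card_pos.1 (by exact_mod_cast hs0))) hs0).ne']
  exact (add_le_add_iff_left _).2 (sum_log_div_card_le_log_sum_div_card hpos)

variable {A B : Finset V}

theorem sum_degree_mul_log_add_le_sum_log_nE_succ (h : G.IsBipartiteWith A B)
    (hdeg : ∀ v, 2 ≤ G.degree v) (k : ℕ) :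
    ∑ v ∈ B, (G.degree v : ℝ) * log (G.degree v - 1) +
        ∑ v ∈ B, ∑ x ∈ G.neighborFinset v, log (nE G k v x) ≤
      ∑ u ∈ A, ∑ v ∈ G.neighborFinset u, log (nE G (k + 1) u v) := by
  calc _ = ∑ v ∈ B, ∑ u ∈ G.neighborFinset v, (log (G.degree v - 1) +
          (∑ x ∈ (G.neighborFinset v).erase u, log (nE G k v x)) / (G.degree v - 1)) := by
        rw [← sum_add_distrib]
        refine sum_congr rfl fun v _ => ?_
        have hd : (G.degree v : ℝ) - 1 ≠ 0 := by
          have : (2 : ℝ) ≤ G.degree v := by exact_mod_cast hdeg v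
          linarith
        rw [sum_add_distrib, sum_const, ← sum_div, sum_sum_erase, card_neighborFinset_eq_degree,
          nsmul_eq_mul, mul_div_cancel_left₀ _ hd]
    _ = ∑ u ∈ A, ∑ v ∈ G.neighborFinset u, (log (G.degree v - 1) +
          (∑ x ∈ (G.neighborFinset v).erase u, log (nE G k v x)) / (G.degree v - 1)) :=
        (h.sum_neighborFinset_comm _).symm
    _ ≤ _ := sum_le_sum fun u _ => sum_le_sum fun v hv =>
        log_degree_sub_one_add_le_log_nE_succ hdeg ((mem_neighborFinset _ _ _).1 hv) k

theorem card_edgeFinset_mul_le_sum_log_nE_two_mul (h : G.IsBipartiteWith A B)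
    (hdeg : ∀ v, 2 ≤ G.degree v) (i : ℕ) :
    (#G.edgeFinset : ℝ) * (i * (log (#G.edgeFinset / #B - 1) + log (#G.edgeFinset / #A - 1))) ≤
      ∑ u ∈ A, ∑ v ∈ G.neighborFinset u, log (nE G (2 * i) u v) := by
  induction i with
  | zero =>
    simp only [CharP.cast_eq_zero, zero_mul, mul_zero]
    refine sum_nonneg fun u _ => sum_nonneg fun v hv => log_nonneg ?_
    exact_mod_cast nE_pos hdeg ((mem_neighborFinset _ _ _).1 hv) _
  | succ i ih =>
    have stepAB := sum_degree_mul_log_add_le_sum_log_nE_succ h hdeg (2 * i + 1)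
    have stepBA := sum_degree_mul_log_add_le_sum_log_nE_succ h.symm hdeg (2 * i)
    have jensenB := h.card_edgeFinset_mul_log_le hdeg
    have jensenA := h.symm.card_edgeFinset_mul_log_le hdeg
    rw [show 2 * (i + 1) = 2 * i + 1 + 1 by ring]
    push_cast
    linarith

theorem sum_log_nE_div_le_log (h : G.IsBipartiteWith A B) (hdeg : ∀ v, 2 ≤ G.degree v) (k : ℕ) :
    (∑ u ∈ A, ∑ v ∈ G.neighborFinset u, log (nE G k u v)) / #G.edgeFinset ≤
      log ((∑ u ∈ A, ∑ v ∈ G.neighborFinset u, (nE G k u v : ℝ)) / #G.edgeFinset) := by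
  have hcard : #(A.sigma fun u => G.neighborFinset u) = #G.edgeFinset := by
    rw [card_sigma]
    simp only [card_neighborFinset_eq_degree]
    exact isBipartiteWith_sum_degrees_eq_card_edges h
  rw [← hcard, sum_sigma', sum_sigma']
  refine sum_log_div_card_le_log_sum_div_card fun p hp => ?_
  exact_mod_cast nE_pos hdeg ((mem_neighborFinset _ _ _).1 (mem_sigma.1 hp).2) k

theorem pow_mul_pow_le_sum_nE_div (h : G.IsBipartiteWith A B) (hdeg : ∀ v, 2 ≤ G.degree v)
    (hA : A.Nonempty) (i : ℕ) :
    ((#G.edgeFinset / #A - 1 : ℝ)) ^ i * (#G.edgeFinset / #B - 1) ^ i ≤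
      (∑ u ∈ A, ∑ v ∈ G.neighborFinset u, (nE G (2 * i) u v : ℝ)) / #G.edgeFinset := by
  obtain ⟨u, hu⟩ := hA
  obtain ⟨w, huw⟩ := G.degree_pos_iff_exists_adj u |>.1 (by linarith [hdeg u])
  have hA1 : (0 : ℝ) < #G.edgeFinset / #A - 1 := by
    linarith [h.two_le_card_edgeFinset_div hdeg ⟨u, hu⟩]
  have hB1 : (0 : ℝ) < #G.edgeFinset / #B - 1 := by
    linarith [h.symm.two_le_card_edgeFinset_div hdeg ⟨w, h.mem_of_mem_adj hu huw⟩]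
  have hE : (0 : ℝ) < #G.edgeFinset := by
    exact_mod_cast card_pos.2 ⟨s(u, w), (mem_edgeFinset).2 huw⟩
  have hN : (0 : ℝ) < ∑ u ∈ A, ∑ v ∈ G.neighborFinset u, (nE G (2 * i) u v : ℝ) :=
    sum_pos' (fun _ _ => by positivity) ⟨u, hu, sum_pos' (fun _ _ => by positivity)
      ⟨w, (mem_neighborFinset _ _ _).2 huw, by exact_mod_cast nE_pos hdeg huw _⟩⟩
  rw [← log_le_log_iff (by positivity) (by positivity)]
  calc log ((#G.edgeFinset / #A - 1 : ℝ) ^ i * (#G.edgeFinset / #B - 1) ^ i)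
      = i * (log (#G.edgeFinset / #B - 1) + log (#G.edgeFinset / #A - 1)) := by
        rw [log_mul (by positivity) (by positivity), log_pow, log_pow]
        ring
    _ ≤ (∑ u ∈ A, ∑ v ∈ G.neighborFinset u, log (nE G (2 * i) u v)) / #G.edgeFinset := by
        rw [le_div_iff₀ hE, mul_comm]
        exact card_edgeFinset_mul_le_sum_log_nE_two_mul h hdeg i
    _ ≤ _ := sum_log_nE_div_le_log h hdeg _

end Walks

theorem hoory_lemma_b_general {V : Type*} [Fintype V] [DecidableEq V]
    (G : SimpleGraph V) [DecidableRel G.Adj] (L R : Finset V)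
    (hpart : ∀ v : V, (v ∈ L ∧ v ∉ R) ∨ (v ∈ R ∧ v ∉ L))
    (hbip : ∀ u v : V, G.Adj u v → (u ∈ L ∧ v ∈ R) ∨ (u ∈ R ∧ v ∈ L))
    (hmin : 2 ≤ G.minDegree)
    (dL dR : ℝ) (hdL : dL = (G.edgeFinset.card : ℝ) / (L.card : ℝ))
    (hdR : dR = (G.edgeFinset.card : ℝ) / (R.card : ℝ)) (i : ℕ) :
    (∑ v ∈ R, ∑ u ∈ G.neighborFinset v, (nE G (2 * i) v u : ℝ)) /
        (G.edgeFinset.card : ℝ) ≥ (dR - 1) ^ i * (dL - 1) ^ i := by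
  have hG : G.IsBipartiteWith R L :=
    ⟨disjoint_coe.2 (disjoint_left.2 fun v hR hL => by rcases hpart v with h | h <;> tauto),
      fun u v huv => (hbip u v huv).symm⟩
  have hdeg : ∀ v, 2 ≤ G.degree v := fun v => hmin.trans (G.minDegree_le_degree v)
  have : Nonempty V := by
    by_contra hV
    rw [not_nonempty_iff] at hV
    simp [minDegree_of_subsingleton] at hmin
  obtain ⟨v⟩ := this
  obtain ⟨w, hvw⟩ := G.degree_pos_iff_exists_adj v |>.1 (by linarith [hdeg v])
  have hR : R.Nonempty := by
    rcases hG.mem_of_adj hvw with ⟨hv, -⟩ | ⟨-, hw⟩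
    exacts [⟨v, hv⟩, ⟨w, hw⟩]
  subst hdL hdR
  exact pow_mul_pow_le_sum_nE_div hG hdeg hR i

theorem hoory_lemma_b {V : Type*} [Fintype V] [DecidableEq V]
    (G : SimpleGraph V) [DecidableRel G.Adj] (L R : Finset V)
    (hpart : ∀ v : V, (v ∈ L ∧ v ∉ R) ∨ (v ∈ R ∧ v ∉ L))
    (hbip : ∀ u v : V, G.Adj u v → (u ∈ L ∧ v ∈ R) ∨ (u ∈ R ∧ v ∈ L))
    (hmin : 2 ≤ G.minDegree)
    (dL dR : ℝ) (hdL : dL = (G.edgeFinset.card : ℝ) / (L.card : ℝ))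
    (hdR : dR = (G.edgeFinset.card : ℝ) / (R.card : ℝ)) (i : ℕ) (hi : 1 ≤ i) :
    (∑ v ∈ R, ∑ u ∈ G.neighborFinset v, (nE G (2 * i) v u : ℝ)) /
        (G.edgeFinset.card : ℝ) ≥ (dR - 1) ^ i * (dL - 1) ^ i :=
  hoory_lemma_b_general G L R hpart hbip hmin dL dR hdL hdR i
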